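/- If P : ℝ⁸ → 𝕆 is a homogeneous harmonic octonion-valued polynomial of degree k that is left 𝕆-analytic (an inner spherical octonionic-analytic of order k), then the function x ↦ x·P(x) (octonionic product) is harmonic on ℝ⁸, and hence its restriction to the unit sphere S⁷ is a spherical harmonic of degree k+1. -/

import Mathlib

noncomputable section
open MeasureTheory Metric
open scoped Quaternion

/-- The octonions, via the Cayley–Dickson construction on the quaternions,
carrying the Euclidean (`L²`) norm. -/
abbrev Octonion : Type := WithLp 2 (ℍ[ℝ] × ℍ[ℝ])

namespace Octonion

def mk (a b : ℍ[ℝ]) : Octonion := (WithLp.equiv 2 (ℍ[ℝ] × ℍ[ℝ])).symm (a, b)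
def p1 (x : Octonion) : ℍ[ℝ] := (WithLp.equiv 2 (ℍ[ℝ] × ℍ[ℝ]) x).1
def p2 (x : Octonion) : ℍ[ℝ] := (WithLp.equiv 2 (ℍ[ℝ] × ℍ[ℝ]) x).2

instance : One Octonion := ⟨mk 1 0⟩
/-- Cayley–Dickson multiplication: `(a,b)(c,d) = (ac - d̄b, da + bc̄)`. -/
instance : Mul Octonion :=
  ⟨fun x y => mk (p1 x * p1 y - star (p2 y) * p2 x) (p2 y * p1 x + p2 x * star (p1 y))⟩

/-- Octonionic conjugation. -/
def conj (x : Octonion) : Octonion := mk (star (p1 x)) (-(p2 x))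

/-- The standard basis `e₀ = 1, e₁, …, e₇` of the octonions. -/
def e : Fin 8 → Octonion
  | 0 => mk 1 0
  | 1 => mk ⟨0,1,0,0⟩ 0
  | 2 => mk ⟨0,0,1,0⟩ 0
  | 3 => mk ⟨0,0,0,1⟩ 0
  | 4 => mk 0 1
  | 5 => mk 0 ⟨0,1,0,0⟩
  | 6 => mk 0 ⟨0,0,1,0⟩
  | 7 => mk 0 ⟨0,0,0,1⟩

/-- The real coordinates of an octonion w.r.t. the basis `e`. -/
def coord (i : Fin 8) (x : Octonion) : ℝ :=
  match i with
  | 0 => (p1 x).re | 1 => (p1 x).imI | 2 => (p1 x).imJ | 3 => (p1 x).imK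
  | 4 => (p2 x).re | 5 => (p2 x).imI | 6 => (p2 x).imJ | 7 => (p2 x).imK

/-- Partial derivative in the direction `e i`. -/
def pd (i : Fin 8) (f : Octonion → Octonion) (x : Octonion) : Octonion :=
  fderiv ℝ f x (e i)

/-- The generalized Cauchy–Riemann operator `Df = ∑ eᵢ ∂f/∂xᵢ`. -/
def D (f : Octonion → Octonion) (x : Octonion) : Octonion := ∑ i, e i * pd i f x

/-- The right-acting Cauchy–Riemann operator `fD = ∑ (∂f/∂xᵢ) eᵢ`. -/
def Dright (f : Octonion → Octonion) (x : Octonion) : Octonion := ∑ i, pd i f x * e i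

/-- The conjugate Cauchy–Riemann operator `D̄f = ∑ ēᵢ ∂f/∂xᵢ`. -/
def Dbar (f : Octonion → Octonion) (x : Octonion) : Octonion := ∑ i, conj (e i) * pd i f x

/-- The Laplacian `Δf = ∑ ∂²f/∂xᵢ²`. -/
def lap (f : Octonion → Octonion) (x : Octonion) : Octonion :=
  ∑ i, fderiv ℝ (fun y => fderiv ℝ f y (e i)) x (e i)

instance : MeasurableSpace Octonion := borel _
instance : BorelSpace Octonion := ⟨rfl⟩
instance : MeasureSpace Octonion := ⟨Measure.addHaar⟩

/-- The surface measure on the unit sphere `S⁷`. -/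
def sphereMeasure : Measure (sphere (0 : Octonion) 1) := (volume : Measure Octonion).toSphere

/-- `ω₈`, the surface area of the unit sphere in `ℝ⁸`. -/
def ω : ℝ := (sphereMeasure Set.univ).toReal

end Octonion


namespace Octonion
lemma p1_mk (a b : ℍ[ℝ]) : p1 (mk a b) = a := rfl
lemma p2_mk (a b : ℍ[ℝ]) : p2 (mk a b) = b := rfl
lemma p1_add (x y : Octonion) : p1 (x + y) = p1 x + p1 y := rfl
lemma p2_add (x y : Octonion) : p2 (x + y) = p2 x + p2 y := rfl
lemma p1_smul (c : ℝ) (x : Octonion) : p1 (c • x) = c • p1 x := rfl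
lemma p2_smul (c : ℝ) (x : Octonion) : p2 (c • x) = c • p2 x := rfl
lemma mk_add (a b c d : ℍ[ℝ]) : mk a b + mk c d = mk (a + c) (b + d) := rfl
lemma mk_smul (r : ℝ) (a b : ℍ[ℝ]) : r • mk a b = mk (r • a) (r • b) := rfl
lemma star_smul'' (c : ℝ) (a : ℍ[ℝ]) : star (c • a) = c • star a := by
  simp [star_smul]
lemma mk_eq (a b c d : ℍ[ℝ]) (h1 : a = c) (h2 : b = d) : mk a b = mk c d := by rw [h1, h2]
lemma mul_def (x y : Octonion) :
    x * y = mk (p1 x * p1 y - star (p2 y) * p2 x) (p2 y * p1 x + p2 x * star (p1 y)) := rfl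

lemma add_mul' (x y z : Octonion) : (x + y) * z = x * z + y * z := by
  simp only [mul_def, p1_add, p2_add, mk_add]
  exact mk_eq _ _ _ _ (by noncomm_ring) (by noncomm_ring)
lemma mul_add' (x y z : Octonion) : x * (y + z) = x * y + x * z := by
  simp only [mul_def, p1_add, p2_add, mk_add, star_add]
  exact mk_eq _ _ _ _ (by noncomm_ring) (by noncomm_ring)
lemma smul_mul' (c : ℝ) (x y : Octonion) : (c • x) * y = c • (x * y) := by
  simp only [mul_def, p1_smul, p2_smul, mk_smul]
  exact mk_eq _ _ _ _ (by rw [smul_sub, smul_mul_assoc, mul_smul_comm])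
    (by rw [smul_add, smul_mul_assoc, mul_smul_comm])
lemma mul_smul' (c : ℝ) (x y : Octonion) : x * (c • y) = c • (x * y) := by
  simp only [mul_def, p1_smul, p2_smul, mk_smul]
  exact mk_eq _ _ _ _
    (by rw [star_smul'', smul_mul_assoc, mul_smul_comm, smul_sub])
    (by rw [star_smul'', smul_mul_assoc, mul_smul_comm, smul_add])
end Octonion

namespace Octonion
/-- Octonion multiplication as a bilinear map. -/
def mulₗ : Octonion →ₗ[ℝ] Octonion →ₗ[ℝ] Octonion :=
  LinearMap.mk₂ ℝ (· * ·) add_mul' smul_mul' mul_add' mul_smul'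

/-- Octonion multiplication as a continuous bilinear map. -/
def B : Octonion →L[ℝ] Octonion →L[ℝ] Octonion :=
  LinearMap.toContinuousLinearMap
    { toFun := fun x => LinearMap.toContinuousLinearMap (mulₗ x)
      map_add' := fun x y => by
        ext z
        simp [LinearMap.coe_toContinuousLinearMap', mulₗ, add_mul']
      map_smul' := fun c x => by
        ext z
        simp [LinearMap.coe_toContinuousLinearMap', mulₗ, smul_mul'] }

lemma B_apply (x y : Octonion) : B x y = x * y := rfl

attribute [irreducible] B
end Octonion


set_option maxHeartbeats 1000000 in
/-- If `P` is a homogeneous harmonic polynomial of degree `k` that is left octonionic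
analytic, then `x ↦ x·P(x)` is harmonic on `ℝ⁸` and homogeneous of degree `k+1`
(hence restricts to a spherical harmonic of degree `k+1` on `S⁷`). -/
theorem mul_inner_spherical_analytic_harmonic (k : ℕ) (P : Octonion → Octonion)
    (hsm : ContDiff ℝ (⊤ : ℕ∞) P)
    (hhom : ∀ c : ℝ, 0 < c → ∀ x, P (c • x) = (c ^ k) • P x)
    (hharm : ∀ x, Octonion.lap P x = 0)
    (hD : ∀ x, Octonion.D P x = 0) :
    (∀ x, Octonion.lap (fun y => y * P y) x = 0) ∧
    (∀ c : ℝ, 0 < c → ∀ x, (c • x) * P (c • x) = (c ^ (k + 1)) • (x * P x)) := by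
  open Octonion in
  constructor
  · intro x
    have hBmul : (fun z : Octonion => z * P z) = fun z => B z (P z) :=
      funext fun z => (B_apply z (P z)).symm
    have hPd : Differentiable ℝ P := hsm.differentiable (by simp)
    have hP1 : ContDiff ℝ (⊤ : ℕ∞) (fderiv ℝ P) := hsm.fderiv_right (mod_cast le_top)
    have hP1d : Differentiable ℝ (fderiv ℝ P) := hP1.differentiable (by simp)
    set Φ : Octonion →L[ℝ] Octonion →L[ℝ] Octonion := fderiv ℝ (fderiv ℝ P) x with hΦ
    have hg : ∀ y : Octonion, HasFDerivAt (fun z : Octonion => B z (P z))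
        ((B y).comp (fderiv ℝ P y) + B.flip (P y)) y := fun y =>
      (B.hasFDerivAt (x := y)).clm_apply (hPd y).hasFDerivAt
    have hfg : ∀ y : Octonion, fderiv ℝ (fun z : Octonion => B z (P z)) y
        = (B y).comp (fderiv ℝ P y) + B.flip (P y) := fun y => (hg y).fderiv
    have hQ : ∀ i : Fin 8, HasFDerivAt (fun y => fderiv ℝ P y (e i))
        ((ContinuousLinearMap.apply ℝ Octonion (e i)).comp Φ) x :=
      fun i => (ContinuousLinearMap.apply ℝ Octonion (e i)).hasFDerivAt.comp x
        (hP1d x).hasFDerivAt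
    have hlapP : Octonion.lap P x = ∑ i : Fin 8, Φ (e i) (e i) := by
      unfold Octonion.lap
      refine Finset.sum_congr rfl fun i _ => ?_
      rw [(hQ i).fderiv]; rfl
    have hsecond : ∀ i : Fin 8,
        fderiv ℝ (fun y => fderiv ℝ (fun z : Octonion => B z (P z)) y (e i)) x (e i)
          = B x (Φ (e i) (e i)) + (B (e i) (fderiv ℝ P x (e i))
            + B (e i) (fderiv ℝ P x (e i))) := by
      intro i
      have h1 : HasFDerivAt (fun y : Octonion => B y (fderiv ℝ P y (e i)))
          ((B x).comp ((ContinuousLinearMap.apply ℝ Octonion (e i)).comp Φ)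
            + B.flip (fderiv ℝ P x (e i))) x :=
        (B.hasFDerivAt (x := x)).clm_apply (hQ i)
      have h2 : HasFDerivAt (fun y : Octonion => B (e i) (P y))
          ((B (e i)).comp (fderiv ℝ P x)) x :=
        (B (e i)).hasFDerivAt.comp x (hPd x).hasFDerivAt
      have hfun : (fun y => fderiv ℝ (fun z : Octonion => B z (P z)) y (e i))
          = fun y : Octonion => B y (fderiv ℝ P y (e i)) + B (e i) (P y) := by
        funext y
        rw [hfg y]
        simp only [ContinuousLinearMap.add_apply, ContinuousLinearMap.comp_apply,
          ContinuousLinearMap.flip_apply]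
      rw [hfun, HasFDerivAt.fderiv (f := fun y : Octonion => B y (fderiv ℝ P y (e i)) + B (e i) (P y)) (h1.add h2)]
      simp only [ContinuousLinearMap.add_apply, ContinuousLinearMap.comp_apply,
        ContinuousLinearMap.flip_apply, ContinuousLinearMap.apply_apply]
      abel
    have hDsum : ∑ i : Fin 8, B (e i) (fderiv ℝ P x (e i)) = Octonion.D P x := by
      unfold Octonion.D Octonion.pd
      exact Finset.sum_congr rfl fun i _ => B_apply _ _
    rw [hBmul]
    unfold Octonion.lap
    calc ∑ i : Fin 8, fderiv ℝ (fun y => fderiv ℝ (fun z : Octonion => B z (P z)) y (e i)) x (e i)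
        = ∑ i : Fin 8, (B x (Φ (e i) (e i)) + (B (e i) (fderiv ℝ P x (e i))
            + B (e i) (fderiv ℝ P x (e i)))) := Finset.sum_congr rfl fun i _ => hsecond i
      _ = B x (∑ i : Fin 8, Φ (e i) (e i)) + (Octonion.D P x + Octonion.D P x) := by
          rw [Finset.sum_add_distrib, Finset.sum_add_distrib, map_sum, hDsum]
      _ = 0 := by rw [← hlapP, hharm x, hD x, map_zero, add_zero, add_zero]
  · intro c hc x
    rw [hhom c hc, Octonion.mul_smul', Octonion.smul_mul', smul_smul, ← pow_succ]
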